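/- arXiv:2009.07369 — 3 statements merged into one kernel-verified Lean document; each statement's English description precedes it below -/
import Mathlib

section
/- Let X be a nonempty type equipped with a rescaling operation s : ℝ → X → X satisfying s 1 x = x and s C (s D x) = s (C*D) x for all C, D > 0 and all x, and a binary relation ≺ on X that is reflexive, transitive, and equivariant under rescaling (for all C > 0, x ≺ y implies s C x ≺ s C y). Assume any two elements can be interleaved: for all x, y there exists C ≥ 1 with x ≺ s C y and y ≺ s C x. Define d(x,y) := sInf { Real.log C | 1 ≤ C ∧ x ≺ s C y ∧ y ≺ s C x }. Then d is a pseudodistance: for all x, y, z one has 0 ≤ d(x,y), d(x,x) = 0, d(x,y) = d(y,x), and d(x,z) ≤ d(x,y) + d(y,z). -/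
/-!
Rescaling `y ≺ s D z` by `C` gives `s C y ≺ s (C * D) z`, so interleavings of `x, y` at scale `C`
and of `y, z` at scale `D` chain to one of `x, z` at scale `C * D`. On logarithms the admissible
scales satisfy `A x y + A y z ⊆ A x z`, and the triangle inequality follows on taking infima.
-/

open scoped Pointwise

section Interleaving

variable {X : Type*} (s : ℝ → X → X) (prec : X → X → Prop)

def interleavingLogs (x y : X) : Set ℝ :=
  {r : ℝ | ∃ C : ℝ, 1 ≤ C ∧ prec x (s C y) ∧ prec y (s C x) ∧ r = Real.log C}

variable {s prec}

theorem interleavingLogs_comm (x y : X) :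
    interleavingLogs s prec x y = interleavingLogs s prec y x := by
  ext r
  constructor <;> rintro ⟨C, hC, hxy, hyx, rfl⟩ <;> exact ⟨C, hC, hyx, hxy, rfl⟩

theorem nonneg_of_mem_interleavingLogs {x y : X} {r : ℝ} (hr : r ∈ interleavingLogs s prec x y) :
    0 ≤ r := by
  obtain ⟨C, hC, -, -, rfl⟩ := hr
  exact Real.log_nonneg hC

theorem bddBelow_interleavingLogs (x y : X) : BddBelow (interleavingLogs s prec x y) :=
  ⟨0, fun _ => nonneg_of_mem_interleavingLogs⟩

theorem interleavingLogs_nonempty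
    (hinter : ∀ x y, ∃ C : ℝ, 1 ≤ C ∧ prec x (s C y) ∧ prec y (s C x)) (x y : X) :
    (interleavingLogs s prec x y).Nonempty := by
  obtain ⟨C, hC, hxy, hyx⟩ := hinter x y
  exact ⟨Real.log C, C, hC, hxy, hyx, rfl⟩

theorem sInf_interleavingLogs_self (hs_one : ∀ x, s 1 x = x) (hrefl : ∀ x, prec x x) (x : X) :
    sInf (interleavingLogs s prec x x) = 0 := by
  have hzero : (0 : ℝ) ∈ interleavingLogs s prec x x :=
    ⟨1, le_rfl, by rw [hs_one]; exact hrefl x, by rw [hs_one]; exact hrefl x, Real.log_one.symm⟩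
  exact IsLeast.csInf_eq ⟨hzero, fun _ => nonneg_of_mem_interleavingLogs⟩

theorem prec_rescale_trans
    (hs_mul : ∀ C D : ℝ, 0 < C → 0 < D → ∀ x, s C (s D x) = s (C * D) x)
    (htrans : ∀ x y z, prec x y → prec y z → prec x z)
    (hequiv : ∀ C : ℝ, 0 < C → ∀ x y, prec x y → prec (s C x) (s C y))
    {x y z : X} {C D : ℝ} (hC : 0 < C) (hD : 0 < D)
    (hxy : prec x (s C y)) (hyz : prec y (s D z)) :
    prec x (s (C * D) z) := by
  have hyz' : prec (s C y) (s (C * D) z) := by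
    simpa only [hs_mul C D hC hD] using hequiv C hC _ _ hyz
  exact htrans _ _ _ hxy hyz'

theorem interleavingLogs_add_subset
    (hs_mul : ∀ C D : ℝ, 0 < C → 0 < D → ∀ x, s C (s D x) = s (C * D) x)
    (htrans : ∀ x y z, prec x y → prec y z → prec x z)
    (hequiv : ∀ C : ℝ, 0 < C → ∀ x y, prec x y → prec (s C x) (s C y)) (x y z : X) :
    interleavingLogs s prec x y + interleavingLogs s prec y z ⊆ interleavingLogs s prec x z := by
  rintro _ ⟨_, ⟨C, hC, hxy, hyx, rfl⟩, _, ⟨D, hD, hyz, hzy, rfl⟩, rfl⟩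
  have hC₀ : 0 < C := zero_lt_one.trans_le hC
  have hD₀ : 0 < D := zero_lt_one.trans_le hD
  refine ⟨C * D, one_le_mul_of_one_le_of_one_le hC hD,
    prec_rescale_trans hs_mul htrans hequiv hC₀ hD₀ hxy hyz, ?_,
    (Real.log_mul hC₀.ne' hD₀.ne').symm⟩
  rw [mul_comm]
  exact prec_rescale_trans hs_mul htrans hequiv hD₀ hC₀ hzy hyx

theorem sInf_interleavingLogs_le_add
    (hs_mul : ∀ C D : ℝ, 0 < C → 0 < D → ∀ x, s C (s D x) = s (C * D) x)
    (htrans : ∀ x y z, prec x y → prec y z → prec x z)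
    (hequiv : ∀ C : ℝ, 0 < C → ∀ x y, prec x y → prec (s C x) (s C y))
    (hinter : ∀ x y, ∃ C : ℝ, 1 ≤ C ∧ prec x (s C y) ∧ prec y (s C x)) (x y z : X) :
    sInf (interleavingLogs s prec x z) ≤
      sInf (interleavingLogs s prec x y) + sInf (interleavingLogs s prec y z) := by
  have hne := interleavingLogs_nonempty hinter
  rw [← csInf_add (hne x y) (bddBelow_interleavingLogs x y) (hne y z)
    (bddBelow_interleavingLogs y z)]
  exact csInf_le_csInf (bddBelow_interleavingLogs x z) ((hne x y).add (hne y z))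
    (interleavingLogs_add_subset hs_mul htrans hequiv x y z)

end Interleaving

theorem cbm_pseudodistance_general
    {X : Type*}
    (s : ℝ → X → X)
    (hs_one : ∀ x, s 1 x = x)
    (hs_mul : ∀ C D : ℝ, 0 < C → 0 < D → ∀ x, s C (s D x) = s (C * D) x)
    (prec : X → X → Prop)
    (hrefl : ∀ x, prec x x)
    (htrans : ∀ x y z, prec x y → prec y z → prec x z)
    (hequiv : ∀ C : ℝ, 0 < C → ∀ x y, prec x y → prec (s C x) (s C y))
    (hinter : ∀ x y, ∃ C : ℝ, 1 ≤ C ∧ prec x (s C y) ∧ prec y (s C x))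
    (d : X → X → ℝ)
    (hd : ∀ x y, d x y =
      sInf {r : ℝ | ∃ C : ℝ, 1 ≤ C ∧ prec x (s C y) ∧ prec y (s C x) ∧ r = Real.log C}) :
    ∀ x y z : X,
      0 ≤ d x y ∧ d x x = 0 ∧ d x y = d y x ∧ d x z ≤ d x y + d y z := by
  have hd' : ∀ x y, d x y = sInf (interleavingLogs s prec x y) := hd
  intro x y z
  simp only [hd']
  exact ⟨Real.sInf_nonneg fun _ => nonneg_of_mem_interleavingLogs,
    sInf_interleavingLogs_self hs_one hrefl x,
    by rw [interleavingLogs_comm],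
    sInf_interleavingLogs_le_add hs_mul htrans hequiv hinter x y z⟩

/-- Abstract pseudodistance version of the contact Banach–Mazur distance:
given a rescaling action `s` and an interleaving relation `prec` that is
reflexive, transitive and rescaling-equivariant, with any two points
interleavable, the function
`d x y = sInf { Real.log C | 1 ≤ C ∧ x ≺ s C y ∧ y ≺ s C x }`
is a pseudodistance. -/
theorem cbm_pseudodistance
    {X : Type*} [Nonempty X]
    (s : ℝ → X → X)
    (hs_one : ∀ x, s 1 x = x)
    (hs_mul : ∀ C D : ℝ, 0 < C → 0 < D → ∀ x, s C (s D x) = s (C * D) x)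
    (prec : X → X → Prop)
    (hrefl : ∀ x, prec x x)
    (htrans : ∀ x y z, prec x y → prec y z → prec x z)
    (hequiv : ∀ C : ℝ, 0 < C → ∀ x y, prec x y → prec (s C x) (s C y))
    (hinter : ∀ x y, ∃ C : ℝ, 1 ≤ C ∧ prec x (s C y) ∧ prec y (s C x))
    (d : X → X → ℝ)
    (hd : ∀ x y, d x y =
      sInf {r : ℝ | ∃ C : ℝ, 1 ≤ C ∧ prec x (s C y) ∧ prec y (s C x) ∧ r = Real.log C}) :
    ∀ x y z : X,
      0 ≤ d x y ∧ d x x = 0 ∧ d x y = d y x ∧ d x z ≤ d x y + d y z :=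
  cbm_pseudodistance_general s hs_one hs_mul prec hrefl htrans hequiv hinter d hd
end

section
/- Let Y be a nonempty compact topological space and f : Y → ℝ continuous with 0 < f y for all y. Then sInf { Real.log C | 1 ≤ C ∧ ∀ y, C⁻¹ ≤ f y ∧ f y ≤ C } = ⨆ y, |Real.log (f y)|, and this common value equals max (Real.log (⨆ y, f y)) (- Real.log (⨅ y, f y)); in particular it is nonnegative. -/
/-! The constants `C ≥ 1` with `C⁻¹ ≤ f ≤ C` are exactly the `exp r` with `r ≥ 0` an upper bound
of `|log f|`, so the optimal `log C` is `⨆ |log f|`. Since `exp` is monotone and continuous it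
commutes with `⨆` and `⨅`, which turns `⨆ |log f| = max (⨆ log f) (-⨅ log f)` into the formula in
terms of `⨆ f` and `⨅ f`. -/

open Real Set

theorem Real.inv_le_and_le_iff_abs_log_le {x C : ℝ} (hx : 0 < x) (hC : 0 < C) :
    C⁻¹ ≤ x ∧ x ≤ C ↔ |log x| ≤ log C := by
  rw [abs_le, ← log_inv, log_le_log_iff (inv_pos.2 hC) hx, log_le_log_iff hx hC]

theorem csInf_Ici_inter_upperBounds {α : Type*} [ConditionallyCompleteLinearOrder α] {s : Set α}
    {a : α} (hne : s.Nonempty) (hbdd : BddAbove s) (ha : a ≤ sSup s) :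
    sInf (Ici a ∩ upperBounds s) = sSup s := by
  rw [(isLUB_csSup hne hbdd).upperBounds_eq, Ici_inter_Ici, sup_eq_right.2 ha, csInf_Ici]

theorem ciSup_abs_eq_max_ciSup_neg_ciInf {ι : Sort*} [Nonempty ι] {g : ι → ℝ}
    (hA : BddAbove (range g)) (hB : BddBelow (range g)) :
    ⨆ i, |g i| = max (⨆ i, g i) (-⨅ i, g i) := by
  have habs : BddAbove (range fun i => |g i|) := by
    obtain ⟨M, hM⟩ := hA
    obtain ⟨m, hm⟩ := hB
    exact ⟨max |m| |M|, forall_mem_range.2 fun i =>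
      abs_le_max_abs_abs (hm (mem_range_self i)) (hM (mem_range_self i))⟩
  refine le_antisymm (ciSup_le fun i => ?_) (max_le ?_ ?_)
  · exact max_le_max (le_ciSup hA i) (neg_le_neg (ciInf_le hB i))
  · exact ciSup_mono habs fun i => le_abs_self _
  · exact neg_le.1 (le_ciInf fun i => (neg_le_neg (le_ciSup habs i)).trans (neg_abs_le _))

theorem Real.log_ciSup_exp {ι : Sort*} [Nonempty ι] {g : ι → ℝ} (hA : BddAbove (range g)) :
    log (⨆ i, exp (g i)) = ⨆ i, g i := by
  rw [← exp_monotone.map_ciSup_of_continuousAt continuous_exp.continuousAt hA, log_exp]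

theorem Real.log_ciInf_exp {ι : Sort*} [Nonempty ι] {g : ι → ℝ} (hB : BddBelow (range g)) :
    log (⨅ i, exp (g i)) = ⨅ i, g i := by
  rw [← exp_monotone.map_ciInf_of_continuousAt continuous_exp.continuousAt hB, log_exp]

theorem setOf_log_interleaving_eq_Ici_inter_upperBounds {ι : Sort*} {f : ι → ℝ} (hpos : ∀ i, 0 < f i) :
    {r : ℝ | ∃ C : ℝ, 1 ≤ C ∧ (∀ i, C⁻¹ ≤ f i ∧ f i ≤ C) ∧ r = log C}
      = Ici 0 ∩ upperBounds (range fun i => |log (f i)|) := by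
  ext r
  simp only [mem_inter_iff, mem_Ici, mem_upperBounds, forall_mem_range]
  constructor
  · rintro ⟨C, hC, hfC, rfl⟩
    exact ⟨log_nonneg hC, fun i =>
      (inv_le_and_le_iff_abs_log_le (hpos i) (zero_lt_one.trans_le hC)).1 (hfC i)⟩
  · rintro ⟨hr, hfr⟩
    refine ⟨exp r, one_le_exp hr, fun i => ?_, (log_exp r).symm⟩
    exact (inv_le_and_le_iff_abs_log_le (hpos i) (exp_pos r)).2 (by rw [log_exp]; exact hfr i)

/-- For a positive continuous function on a nonempty compact space, the optimal
interleaving constant satisfies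
`sInf { log C | 1 ≤ C ∧ ∀ y, C⁻¹ ≤ f y ≤ C } = ⨆ y, |log (f y)|
  = max (log (⨆ y, f y)) (- log (⨅ y, f y)) ≥ 0`. -/
theorem conformal_factor_distance
    {Y : Type*} [TopologicalSpace Y] [CompactSpace Y] [Nonempty Y]
    (f : Y → ℝ) (hf : Continuous f) (hpos : ∀ y, 0 < f y) :
    (sInf {r : ℝ | ∃ C : ℝ, 1 ≤ C ∧ (∀ y, C⁻¹ ≤ f y ∧ f y ≤ C) ∧ r = Real.log C}
      = ⨆ y, |Real.log (f y)|) ∧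
    ((⨆ y, |Real.log (f y)|)
      = max (Real.log (⨆ y, f y)) (- Real.log (⨅ y, f y))) ∧
    (0 ≤ ⨆ y, |Real.log (f y)|) := by
  have hlog : Continuous fun y => log (f y) := hf.log fun y => (hpos y).ne'
  have hbdd : BddAbove (range fun y => |log (f y)|) := (isCompact_range hlog.abs).bddAbove
  have hnonneg : 0 ≤ ⨆ y, |log (f y)| := Real.iSup_nonneg fun y => abs_nonneg _
  have hA := (isCompact_range hlog).bddAbove
  have hB := (isCompact_range hlog).bddBelow
  refine ⟨?_, ?_, hnonneg⟩
  · rw [setOf_log_interleaving_eq_Ici_inter_upperBounds hpos]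
    exact csInf_Ici_inter_upperBounds (range_nonempty _) hbdd hnonneg
  · have hsup := log_ciSup_exp hA
    have hinf := log_ciInf_exp hB
    simp only [fun y => exp_log (hpos y)] at hsup hinf
    rw [hsup, hinf]
    exact ciSup_abs_eq_max_ciSup_neg_ciInf hA hB
end

section
/- Let T : ℝ with 0 < T, let p q : ℤ with Int.gcd p q = 1, and let θ₀ φ₀ : ℝ. Define x : ℝ → AddCircle (1 : ℝ) × AddCircle (2 * Real.pi) by x t = ( ↑(θ₀ + (q / T) * t), ↑(φ₀ - (2 * Real.pi * p / T) * t) ). Then x is periodic with period T (Function.Periodic x T), and T is the minimal positive period: for every T' with 0 < T' ∧ T' < T, ¬ Function.Periodic x T'. -/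
/-! `x(t + s) = x(t)` holds for one (equivalently every) `t` exactly when both coordinates
advance by a full turn, i.e. when `q·(s/T)` and `p·(s/T)` are integers. By Bézout for the
coprime pair `(p, q)`, this forces `s/T ∈ ℤ`, so no `s ∈ (0, T)` is a period. -/

theorem Function.periodic_prodMk_iff {α β γ : Type*} [Add α] {f : α → β} {g : α → γ} {s : α} :
    Function.Periodic (fun t => (f t, g t)) s ↔ f.Periodic s ∧ g.Periodic s := by
  simp only [Function.Periodic, Prod.mk.injEq, forall_and]

theorem AddCircle.periodic_coe_affine_iff {𝕜 : Type*} [Ring 𝕜] (c a b s : 𝕜) :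
    Function.Periodic (fun t : 𝕜 => ((a + b * t : 𝕜) : AddCircle c)) s ↔
      ∃ n : ℤ, n • c = b * s := by
  simp only [Function.Periodic, mul_add, ← add_assoc, AddCircle.coe_add, add_eq_left,
    forall_const, AddCircle.coe_eq_zero_iff]

theorem IsCoprime.exists_intCast_eq_of_mul {R : Type*} [CommRing R] {p q : ℤ}
    (h : IsCoprime p q) {r : R} {m n : ℤ} (hp : (p : R) * r = m) (hq : (q : R) * r = n) :
    ∃ k : ℤ, r = k := by
  obtain ⟨a, b, hab⟩ := h
  have hab' : (a : R) * p + b * q = 1 := by exact_mod_cast congrArg (Int.cast : ℤ → R) hab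
  exact ⟨a * m + b * n, by push_cast; linear_combination (-hab') * r + a * hp + b * hq⟩

theorem lutz_orbit_periodic_iff (T : ℝ) (p q : ℤ) (θ₀ φ₀ s : ℝ) :
    Function.Periodic
      (fun t : ℝ =>
        ((↑(θ₀ + ((q : ℝ) / T) * t) : AddCircle (1 : ℝ)),
         (↑(φ₀ - (2 * Real.pi * (p : ℝ) / T) * t) : AddCircle (2 * Real.pi)))) s ↔
      (∃ m : ℤ, (q : ℝ) * (s / T) = m) ∧ ∃ n : ℤ, (p : ℝ) * (s / T) = n := by
  simp only [sub_eq_add_neg (a := φ₀), ← neg_mul]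
  rw [Function.periodic_prodMk_iff, AddCircle.periodic_coe_affine_iff,
    AddCircle.periodic_coe_affine_iff]
  refine and_congr (exists_congr fun m => ?_) ⟨fun ⟨n, hn⟩ => ⟨-n, ?_⟩, fun ⟨n, hn⟩ => ⟨-n, ?_⟩⟩
  · rw [zsmul_eq_mul, mul_one, eq_comm, mul_div_assoc', div_mul_eq_mul_div]
  · rw [zsmul_eq_mul] at hn
    apply mul_right_cancel₀ Real.two_pi_pos.ne'
    push_cast
    linear_combination hn
  · rw [zsmul_eq_mul]
    push_cast
    linear_combination 2 * Real.pi * hn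

/-- The Reeb orbit `x(t) = (θ₀ + (q/T)t, φ₀ − (2πp/T)t)` on the torus
`ℝ/ℤ × ℝ/2πℤ`, with `p, q` coprime, is periodic with period `T`, and `T` is the
minimal positive period. -/
theorem lutz_orbit_minimal_period
    (T : ℝ) (hT : 0 < T) (p q : ℤ) (hpq : Int.gcd p q = 1) (θ₀ φ₀ : ℝ) :
    Function.Periodic
      (fun t : ℝ =>
        ((↑(θ₀ + ((q : ℝ) / T) * t) : AddCircle (1 : ℝ)),
         (↑(φ₀ - (2 * Real.pi * (p : ℝ) / T) * t) : AddCircle (2 * Real.pi)))) T ∧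
    ∀ T' : ℝ, 0 < T' ∧ T' < T →
      ¬ Function.Periodic
        (fun t : ℝ =>
          ((↑(θ₀ + ((q : ℝ) / T) * t) : AddCircle (1 : ℝ)),
           (↑(φ₀ - (2 * Real.pi * (p : ℝ) / T) * t) : AddCircle (2 * Real.pi)))) T' := by
  simp only [lutz_orbit_periodic_iff T]
  refine ⟨⟨⟨q, by rw [div_self hT.ne', mul_one]⟩, ⟨p, by rw [div_self hT.ne', mul_one]⟩⟩, ?_⟩
  rintro T' ⟨hT'_pos, hT'_lt⟩ ⟨⟨m, hm⟩, ⟨n, hn⟩⟩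
  obtain ⟨k, hk⟩ := (Int.isCoprime_iff_gcd_eq_one.mpr hpq).exists_intCast_eq_of_mul hn hm
  have hk_pos : (0 : ℝ) < k := hk ▸ div_pos hT'_pos hT
  have hk_lt : (k : ℝ) < 1 := hk ▸ (div_lt_one hT).mpr hT'_lt
  have : (0 : ℤ) < k ∧ k < 1 := ⟨by exact_mod_cast hk_pos, by exact_mod_cast hk_lt⟩
  omega
end
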